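/- There is no continuous map g : D² → S¹ from the closed unit disk to the circle whose restriction to the boundary circle S¹ is antipode-preserving, i.e. satisfies g(-t) = -g(t) for all t ∈ S¹. -/

import Mathlib

/-!
The disk is simply connected, so a map `g` from it to the circle lifts through `t ↦ exp (i t)`
to a real function `θ`. If `g` were odd on the boundary circle, then `θ (-t) - θ t` would be a
continuous function on the (connected) circle with values in `π + 2πℤ`, hence a constant `c`;
applying this at `t` and `-t` gives `2c = 0`, which is impossible.
-/

open Metric Real Function Set

namespace Circle

variable {A : Type*} [TopologicalSpace A]

theorem exp_add_pi (x : ℝ) : exp (x + π) = -exp x := by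
  ext; simp

theorem exists_lift [SimplyConnectedSpace A] [LocallyPathConnectedSpace A] (f : C(A, Circle)) :
    ∃ θ : C(A, ℝ), exp ∘ θ = f := by
  obtain ⟨a₀⟩ := (inferInstance : Nonempty A)
  obtain ⟨θ, -, hθ⟩ :=
    (isCoveringMap_exp.existsUnique_continuousMap_lifts f a₀ _ (exp_arg (f a₀))).exists
  exact ⟨θ, hθ⟩

theorem not_exists_lift_of_map_involutive_eq_neg [PreconnectedSpace A] [Nonempty A]
    {σ : A → A} (hσ : Involutive σ) (hσc : Continuous σ) {f : A → Circle}
    (hf : ∀ a, f (σ a) = -f a) : ¬ ∃ θ : C(A, ℝ), exp ∘ θ = f := by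
  rintro ⟨θ, hθ⟩
  obtain ⟨a₀⟩ := (inferInstance : Nonempty A)
  have hlift (a : A) : exp (θ a) = f a := congrFun hθ a
  obtain ⟨m, hm⟩ : ∃ m : ℤ, θ (σ a₀) = θ a₀ + π + m * (2 * π) := by
    rw [← exp_eq_exp, exp_add_pi, hlift, hlift, hf]
  -- `θ ∘ σ` and `θ + c` lift the same map and agree at `a₀`, so they coincide.
  set c : ℝ := π + m * (2 * π) with hc_def
  have hshift : θ ∘ σ = fun a => θ a + c := by
    refine isCoveringMap_exp.eq_of_comp_eq (θ.continuous.comp hσc) (by fun_prop) ?_ a₀ ?_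
    · ext1 a
      rw [comp_apply, comp_apply, comp_apply, hlift, hf, hc_def, ← add_assoc, exp_add,
        exp_int_mul_two_pi, mul_one, exp_add_pi, hlift]
    · simp only [comp_apply, hm, c]; ring
  have hc : c = 0 := by
    have := congrFun hshift (σ a₀)
    simp only [comp_apply, hσ a₀, hm] at this
    linarith
  have : (2 * m + 1 : ℝ) * π = 0 := by linarith
  rcases mul_eq_zero.mp this with h | h
  · have : (2 * m + 1 : ℤ) = 0 := by exact_mod_cast h
    omega
  · exact pi_ne_zero h

end Circle

theorem not_exists_continuous_closedBall_circle_odd_on_sphere {E : Type*} [NormedAddCommGroup E]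
    [NormedSpace ℝ E] (hE : 1 < Module.rank ℝ E) :
    ¬ ∃ f : C(closedBall (0 : E) 1, Circle),
      ∀ t : sphere (0 : E) 1, f ⟨(-t : sphere (0 : E) 1), sphere_subset_closedBall (-t).2⟩
        = -f ⟨t, sphere_subset_closedBall t.2⟩ := by
  rintro ⟨f, hf⟩
  have := contractibleSpace_closedBall (x := (0 : E)) zero_le_one
  have := (convex_closedBall (0 : E) 1).locallyPathConnectedSpace
  have := isConnected_iff_connectedSpace.mp (isConnected_sphere hE (0 : E) zero_le_one)
  obtain ⟨θ, hθ⟩ := Circle.exists_lift f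
  let ι : C(sphere (0 : E) 1, closedBall (0 : E) 1) :=
    ⟨inclusion sphere_subset_closedBall, continuous_inclusion _⟩
  exact Circle.not_exists_lift_of_map_involutive_eq_neg neg_involutive continuous_neg hf
    ⟨θ.comp ι, by rw [ContinuousMap.coe_comp, ← comp_assoc, hθ]⟩

noncomputable def sphereToCircle : C(sphere (0 : EuclideanSpace ℝ (Fin 2)) 1, Circle) where
  toFun x := ⟨Complex.orthonormalBasisOneI.repr.symm x, mem_sphere_zero_iff_norm.mpr <|
    (LinearIsometryEquiv.norm_map _ _).trans (mem_sphere_zero_iff_norm.mp x.2)⟩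
  continuous_toFun := by fun_prop

lemma sphereToCircle_neg (x : sphere (0 : EuclideanSpace ℝ (Fin 2)) 1) :
    sphereToCircle (-x) = -sphereToCircle x :=
  Circle.ext (map_neg _ _)

/-- There is no continuous map from the closed unit disk D² to the circle S¹
whose restriction to the boundary circle is antipode-preserving. -/
theorem no_disk_to_circle_odd_on_boundary :
    ¬ ∃ g : C(Metric.closedBall (0 : EuclideanSpace ℝ (Fin 2)) 1,
              Metric.sphere (0 : EuclideanSpace ℝ (Fin 2)) 1),
      ∀ t : Metric.sphere (0 : EuclideanSpace ℝ (Fin 2)) 1,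
        g ⟨((-t : Metric.sphere (0 : EuclideanSpace ℝ (Fin 2)) 1) :
              EuclideanSpace ℝ (Fin 2)),
            Metric.sphere_subset_closedBall (-t).2⟩
          = -(g ⟨(t : EuclideanSpace ℝ (Fin 2)),
                 Metric.sphere_subset_closedBall t.2⟩) := by
  rintro ⟨g, hg⟩
  have hrank : 1 < Module.rank ℝ (EuclideanSpace ℝ (Fin 2)) := by
    rw [← Module.finrank_eq_rank, finrank_euclideanSpace_fin]; norm_num
  exact not_exists_continuous_closedBall_circle_odd_on_sphere hrank
    ⟨sphereToCircle.comp g, fun t => by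
      simp only [ContinuousMap.comp_apply, hg, sphereToCircle_neg]⟩
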